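/- Let H be a weak Hopf algebra and C a symmetric left partial H-module coalgebra via ·. Then for all h ∈ H_s, k ∈ H and c ∈ C: (i) h·(k·c) = hk·c; (ii) Δ(h·c) = c₁⊗(h·c₂). -/
import Mathlib


open TensorProduct Coalgebra

noncomputable section

variable (k : Type*) [Field k]

section WeakHopfDefs

variable (H : Type*) [Ring H] [Algebra k H] [Coalgebra k H]

/-- The target map `ε_t(h) = ε(1₁ h) 1₂` of a weak bialgebra. -/
def wεt (h : H) : H :=
  (TensorProduct.lid k H)
    ((TensorProduct.map (counit (R := k) ∘ₗ LinearMap.mulRight k h) (LinearMap.id))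
      (comul (R := k) (1 : H)))

/-- The source map `ε_s(h) = 1₁ ε(h 1₂)` of a weak bialgebra. -/
def wεs (h : H) : H :=
  (TensorProduct.rid k H)
    ((TensorProduct.map (LinearMap.id) (counit (R := k) ∘ₗ LinearMap.mulLeft k h))
      (comul (R := k) (1 : H)))

/-- A weak Hopf algebra structure on an algebra `H` which is also a coalgebra:
the weak bialgebra axioms together with an antipode `S`. -/
structure WeakHopf : Type _ where
  /-- Δ is multiplicative -/
  comul_mul : ∀ h g : H, comul (R := k) (h * g) = comul (R := k) h * comul (R := k) g
  /-- ε(hgl) = Σ ε(h g₁) ε(g₂ l) -/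
  counit_weak_mul : ∀ h g l : H, counit (R := k) (h * g * l)
      = LinearMap.mul' k k
          ((TensorProduct.map (counit (R := k) ∘ₗ LinearMap.mulLeft k h)
              (counit (R := k) ∘ₗ LinearMap.mulRight k l)) (comul (R := k) g))
  /-- ε(hgl) = Σ ε(h g₂) ε(g₁ l) -/
  counit_weak_mul' : ∀ h g l : H, counit (R := k) (h * g * l)
      = LinearMap.mul' k k
          ((TensorProduct.map (counit (R := k) ∘ₗ LinearMap.mulLeft k h)
              (counit (R := k) ∘ₗ LinearMap.mulRight k l))
            ((TensorProduct.comm k H H) (comul (R := k) g)))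
  /-- (1 ⊗ Δ(1))(Δ(1) ⊗ 1) = Δ²(1) -/
  comul_one_left :
      ((1 : H) ⊗ₜ[k] comul (R := k) (1 : H))
          * ((TensorProduct.assoc k H H H) (comul (R := k) (1 : H) ⊗ₜ[k] (1 : H)))
        = (LinearMap.lTensor H (comul (R := k))) (comul (R := k) (1 : H))
  /-- (Δ(1) ⊗ 1)(1 ⊗ Δ(1)) = Δ²(1) -/
  comul_one_right :
      ((TensorProduct.assoc k H H H) (comul (R := k) (1 : H) ⊗ₜ[k] (1 : H)))
          * ((1 : H) ⊗ₜ[k] comul (R := k) (1 : H))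
        = (LinearMap.lTensor H (comul (R := k))) (comul (R := k) (1 : H))
  /-- the antipode -/
  S : H →ₗ[k] H
  /-- Σ h₁ S(h₂) = ε_t(h) -/
  antipode_t : ∀ h : H,
      LinearMap.mul' k H ((LinearMap.lTensor H S) (comul (R := k) h)) = wεt k H h
  /-- Σ S(h₁) h₂ = ε_s(h) -/
  antipode_s : ∀ h : H,
      LinearMap.mul' k H ((LinearMap.rTensor H S) (comul (R := k) h)) = wεs k H h
  /-- Σ S(h₁) h₂ S(h₃) = S(h) -/
  antipode_mid : ∀ h : H,
      LinearMap.mul' k H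
        ((TensorProduct.map S (LinearMap.mul' k H ∘ₗ LinearMap.lTensor H S))
          ((LinearMap.lTensor H (comul (R := k))) (comul (R := k) h))) = S h

end WeakHopfDefs

section Actions

variable (H : Type*) [Ring H] [Algebra k H] [Coalgebra k H]
variable (C : Type*) [AddCommGroup C] [Module k C] [Coalgebra k C]

/-- The Sweedler sum `Σ (h g₁ · c₁) ε(g₂ · c₂)` appearing in (PMC3). -/
def pmc3RHS (act : H →ₗ[k] C →ₗ[k] C) (h g : H) (c : C) : C :=
  (TensorProduct.rid k C)
    ((TensorProduct.map
        ((TensorProduct.lift act) ∘ₗ (LinearMap.rTensor C (LinearMap.mulLeft k h)))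
        (counit (R := k) ∘ₗ (TensorProduct.lift act)))
      ((TensorProduct.tensorTensorTensorComm k H H C C)
        (comul (R := k) g ⊗ₜ[k] comul (R := k) c)))

/-- The Sweedler sum `Σ ε(g₁ · c₁) (h g₂ · c₂)` appearing in the symmetry condition. -/
def pmc3symRHS (act : H →ₗ[k] C →ₗ[k] C) (h g : H) (c : C) : C :=
  (TensorProduct.lid k C)
    ((TensorProduct.map
        (counit (R := k) ∘ₗ (TensorProduct.lift act))
        ((TensorProduct.lift act) ∘ₗ (LinearMap.rTensor C (LinearMap.mulLeft k h))))
      ((TensorProduct.tensorTensorTensorComm k H H C C)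
        (comul (R := k) g ⊗ₜ[k] comul (R := k) c)))

/-- (MC2)/(PMC2): `Δ(h·c) = (h₁·c₁) ⊗ (h₂·c₂)`. -/
def SweedlerComulCompat (act : H →ₗ[k] C →ₗ[k] C) : Prop :=
  ∀ (h : H) (c : C),
    comul (R := k) (act h c)
      = (TensorProduct.map (TensorProduct.lift act) (TensorProduct.lift act))
          ((TensorProduct.tensorTensorTensorComm k H H C C)
            (comul (R := k) h ⊗ₜ[k] comul (R := k) c))

/-- `C` is a left partial `H`-module coalgebra via `act` (`act h c = h · c`). -/
structure IsPartialModuleCoalgebra (act : H →ₗ[k] C →ₗ[k] C) : Prop where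
  pmc1 : ∀ c : C, act 1 c = c
  pmc2 : SweedlerComulCompat k H C act
  pmc3 : ∀ (h g : H) (c : C), act h (act g c) = pmc3RHS k H C act h g c

/-- `C` is a symmetric left partial `H`-module coalgebra via `act`. -/
structure IsSymmetricPartialModuleCoalgebra (act : H →ₗ[k] C →ₗ[k] C)
    extends IsPartialModuleCoalgebra k H C act : Prop where
  pmc3sym : ∀ (h g : H) (c : C), act h (act g c) = pmc3symRHS k H C act h g c

/-- `C` is a left `H`-module coalgebra via `act`. -/
structure IsModuleCoalgebra (act : H →ₗ[k] C →ₗ[k] C) : Prop where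
  mc1 : ∀ c : C, act 1 c = c
  mc2 : SweedlerComulCompat k H C act
  mc3 : ∀ (h g : H) (c : C), act h (act g c) = act (h * g) c
  mc4 : ∀ (h : H) (c : C), counit (R := k) (act h c) = counit (R := k) (act (wεs k H h) c)

end Actions

end

section AuxA

variable {k : Type*} [Field k] {H : Type*} [Ring H] [Algebra k H] [Coalgebra k H]

omit [Coalgebra k H] in
lemma lTensor_mulLeft_eq (z : H) (T : H ⊗[k] H) :
    LinearMap.lTensor H (LinearMap.mulLeft k z) T = ((1 : H) ⊗ₜ[k] z) * T := by
  induction T using TensorProduct.induction_on with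
  | zero => simp
  | tmul a b => simp [Algebra.TensorProduct.tmul_mul_tmul]
  | add x y hx hy => simp [mul_add, hx, hy]

lemma comul_one_mul (wh : WeakHopf k H) (g : H) :
    comul (R := k) (1 : H) * comul (R := k) g = comul (R := k) g := by
  rw [← wh.comul_mul, one_mul]

set_option synthInstance.maxHeartbeats 1000000 in
set_option maxHeartbeats 1000000 in
lemma comul_wεs (wh : WeakHopf k H) (x : H) :
    comul (R := k) (wεs k H x) = ((1 : H) ⊗ₜ[k] wεs k H x) * comul (R := k) (1 : H) := by
  obtain ⟨s, hs⟩ := TensorProduct.exists_finset (comul (R := k) (1 : H))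
  have hw : wεs k H x = ∑ p ∈ s, counit (R := k) (x * p.2) • p.1 := by
    rw [wεs, hs]
    simp [map_sum]
  have h2 : LinearMap.lTensor H (comul (R := k)) (comul (R := k) (1 : H))
      = ∑ p ∈ s, ∑ q ∈ s, p.1 ⊗ₜ[k] ((q.1 * p.2) ⊗ₜ[k] q.2) := by
    rw [← wh.comul_one_left, hs]
    simp only [map_sum, TensorProduct.assoc_tmul, Finset.mul_sum, Finset.sum_mul,
      TensorProduct.tmul_sum, TensorProduct.sum_tmul,
      Algebra.TensorProduct.tmul_mul_tmul, one_mul, mul_one]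
  have star : ∑ p ∈ s, (comul (R := k) p.1) ⊗ₜ[k] p.2
      = ∑ p ∈ s, ∑ q ∈ s, (p.1 ⊗ₜ[k] (q.1 * p.2)) ⊗ₜ[k] q.2 := by
    have h1 : LinearMap.rTensor H (comul (R := k)) (comul (R := k) (1 : H))
        = ∑ p ∈ s, (comul (R := k) p.1) ⊗ₜ[k] p.2 := by rw [hs]; simp
    rw [← h1, ← Coalgebra.coassoc_symm_apply, h2, map_sum]
    simp [map_sum, TensorProduct.assoc_symm_tmul]
  have final := congrArg
    (fun T => (TensorProduct.rid k (H ⊗[k] H))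
      ((LinearMap.lTensor (H ⊗[k] H) ((counit (R := k)) ∘ₗ LinearMap.mulLeft k x)) T)) star
  simp only [map_sum, LinearMap.lTensor_tmul, LinearMap.comp_apply, LinearMap.mulLeft_apply,
    TensorProduct.rid_tmul] at final
  calc comul (R := k) (wεs k H x) = ∑ p ∈ s, counit (R := k) (x * p.2) • comul (R := k) p.1 := by
        rw [hw]; simp [map_sum]
    _ = ∑ p ∈ s, ∑ q ∈ s, counit (R := k) (x * q.2) • (p.1 ⊗ₜ[k] (q.1 * p.2)) := final
    _ = ((1 : H) ⊗ₜ[k] wεs k H x) * comul (R := k) (1 : H) := by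
        rw [hw]
        conv_rhs => rw [hs]
        simp only [TensorProduct.tmul_sum, TensorProduct.sum_tmul, Finset.sum_mul,
          Finset.mul_sum, TensorProduct.smul_tmul', TensorProduct.tmul_smul, smul_mul_assoc,
          Algebra.TensorProduct.tmul_mul_tmul, one_mul]

end AuxA
section AuxB

variable {k : Type*} [Field k] {H : Type*} [Ring H] [Algebra k H] [Coalgebra k H]
variable {C : Type*} [AddCommGroup C] [Module k C] [Coalgebra k C]

lemma comul_wεs_mul (wh : WeakHopf k H) (x g : H) :
    comul (R := k) (wεs k H x * g)
      = LinearMap.lTensor H (LinearMap.mulLeft k (wεs k H x)) (comul (R := k) g) := by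
  rw [wh.comul_mul, comul_wεs wh, lTensor_mulLeft_eq, mul_assoc, comul_one_mul wh]

/-- `h·c = Σ ε(h₁·c₁) (h₂·c₂)`, from (PMC2) plus the counit axiom of `C`. -/
lemma act_eq_counit_form {act : H →ₗ[k] C →ₗ[k] C}
    (hp2 : SweedlerComulCompat k H C act) (h : H) (c : C) :
    act h c = (TensorProduct.lid k C)
      ((TensorProduct.map ((counit (R := k)) ∘ₗ TensorProduct.lift act) (TensorProduct.lift act))
        ((TensorProduct.tensorTensorTensorComm k H H C C)
          (comul (R := k) h ⊗ₜ[k] comul (R := k) c))) := by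
  have h2 : (TensorProduct.map ((counit (R := k)) ∘ₗ TensorProduct.lift act)
        (TensorProduct.lift act) :
        (H ⊗[k] C) ⊗[k] (H ⊗[k] C) →ₗ[k] k ⊗[k] C)
      = (LinearMap.rTensor C (counit (R := k))) ∘ₗ
          TensorProduct.map (TensorProduct.lift act) (TensorProduct.lift act) := by
    rw [LinearMap.rTensor, ← TensorProduct.map_comp, LinearMap.id_comp]
  rw [h2, LinearMap.comp_apply, ← hp2 h c, Coalgebra.rTensor_counit_comul,
    TensorProduct.lid_tmul, one_smul]

lemma sym_shift {act : H →ₗ[k] C →ₗ[k] C} (z : H) (T : H ⊗[k] H) (U : C ⊗[k] C) :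
    (TensorProduct.map ((counit (R := k)) ∘ₗ TensorProduct.lift act) (TensorProduct.lift act))
        ((TensorProduct.tensorTensorTensorComm k H H C C)
          ((LinearMap.lTensor H (LinearMap.mulLeft k z) T) ⊗ₜ[k] U))
      = (TensorProduct.map ((counit (R := k)) ∘ₗ TensorProduct.lift act)
            ((TensorProduct.lift act) ∘ₗ LinearMap.rTensor C (LinearMap.mulLeft k z)))
          ((TensorProduct.tensorTensorTensorComm k H H C C) (T ⊗ₜ[k] U)) := by
  induction T using TensorProduct.induction_on with
  | zero => simp
  | tmul a b =>
    induction U using TensorProduct.induction_on with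
    | zero => simp
    | tmul u v => simp
    | add U1 U2 hU1 hU2 =>
      simp only [TensorProduct.tmul_add, map_add, hU1, hU2]
  | add T1 T2 hT1 hT2 =>
    simp only [map_add, TensorProduct.add_tmul, hT1, hT2]

end AuxB
section AuxC

variable {k : Type*} [Field k] {H : Type*} [Ring H] [Algebra k H] [Coalgebra k H]
variable {C : Type*} [AddCommGroup C] [Module k C] [Coalgebra k C]

lemma part_one (wh : WeakHopf k H) {act : H →ₗ[k] C →ₗ[k] C}
    (hp : IsSymmetricPartialModuleCoalgebra k H C act) (x g : H) (c : C) :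
    act (wεs k H x) (act g c) = act (wεs k H x * g) c := by
  rw [hp.pmc3sym]
  rw [act_eq_counit_form hp.pmc2 (wεs k H x * g) c]
  rw [comul_wεs_mul wh, sym_shift]
  rfl

end AuxC
noncomputable section AuxD

variable {k : Type*} [Field k] {H : Type*} [Ring H] [Algebra k H] [Coalgebra k H]
variable {C : Type*} [AddCommGroup C] [Module k C] [Coalgebra k C]

/-- The map `(b ⊗ b') ⊗ (v ⊗ v') ↦ (z b · v) ε(b' · v')`. -/
def PzMap (act : H →ₗ[k] C →ₗ[k] C) (z : H) :
    ((H ⊗[k] H) ⊗[k] (C ⊗[k] C)) →ₗ[k] C :=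
  (TensorProduct.rid k C).toLinearMap ∘ₗ
    (TensorProduct.map
      ((TensorProduct.lift act) ∘ₗ (LinearMap.rTensor C (LinearMap.mulLeft k z)))
      ((counit (R := k)) ∘ₗ TensorProduct.lift act)) ∘ₗ
    (TensorProduct.tensorTensorTensorComm k H H C C).toLinearMap

lemma PzMap_comul (act : H →ₗ[k] C →ₗ[k] C) (z g : H) (c : C) :
    PzMap act z (comul (R := k) g ⊗ₜ[k] comul (R := k) c) = pmc3RHS k H C act z g c := rfl

/-- `b ↦ (b ⊗ 1) Δ(1)`. -/
def phiMap (k : Type*) [Field k] (H : Type*) [Ring H] [Algebra k H] [Coalgebra k H] :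
    H →ₗ[k] H ⊗[k] H :=
  (LinearMap.mulRight k (comul (R := k) (1 : H))) ∘ₗ ((TensorProduct.mk k H H).flip 1)

set_option synthInstance.maxHeartbeats 1000000 in
set_option maxHeartbeats 1000000 in
lemma KLgen {act : H →ₗ[k] C →ₗ[k] C} (hp : IsPartialModuleCoalgebra k H C act)
    (z : H) (T : H ⊗[k] H) (U : C ⊗[k] C) :
    LinearMap.lTensor C (act z)
        ((TensorProduct.map (TensorProduct.lift act) (TensorProduct.lift act))
          ((TensorProduct.tensorTensorTensorComm k H H C C) (T ⊗ₜ[k] U)))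
      = (TensorProduct.map (TensorProduct.lift act) (PzMap act z))
          ((TensorProduct.tensorTensorTensorComm k H (H ⊗[k] H) C (C ⊗[k] C))
            ((LinearMap.lTensor H (comul (R := k)) T) ⊗ₜ[k]
              (LinearMap.lTensor C (comul (R := k)) U))) := by
  induction T using TensorProduct.induction_on with
  | zero => simp
  | tmul a b =>
    induction U using TensorProduct.induction_on with
    | zero => simp
    | tmul u v =>
      simp only [TensorProduct.tensorTensorTensorComm_tmul, TensorProduct.map_tmul,
        LinearMap.lTensor_tmul, TensorProduct.lift.tmul]
      rw [hp.pmc3 z b v, PzMap_comul]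
    | add U1 U2 hU1 hU2 =>
      simp only [TensorProduct.tmul_add, map_add, hU1, hU2]
  | add T1 T2 hT1 hT2 =>
    simp only [map_add, TensorProduct.add_tmul, hT1, hT2]

lemma KL {act : H →ₗ[k] C →ₗ[k] C} (hp : IsPartialModuleCoalgebra k H C act)
    (z : H) (c : C) :
    LinearMap.lTensor C (act z) (comul (R := k) c)
      = (TensorProduct.map (TensorProduct.lift act) (PzMap act z))
          ((TensorProduct.tensorTensorTensorComm k H (H ⊗[k] H) C (C ⊗[k] C))
            ((LinearMap.lTensor H (comul (R := k)) (comul (R := k) (1 : H))) ⊗ₜ[k]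
              (LinearMap.lTensor C (comul (R := k)) (comul (R := k) c)))) := by
  have h0 : comul (R := k) c
      = (TensorProduct.map (TensorProduct.lift act) (TensorProduct.lift act))
          ((TensorProduct.tensorTensorTensorComm k H H C C)
            (comul (R := k) (1 : H) ⊗ₜ[k] comul (R := k) c)) := by
    have := hp.pmc2 1 c
    rwa [hp.pmc1] at this
  conv_lhs => rw [h0]
  exact KLgen hp z _ _

set_option synthInstance.maxHeartbeats 1000000 in
set_option maxHeartbeats 1000000 in
lemma Pz_shift {act : H →ₗ[k] C →ₗ[k] C} (hp : IsPartialModuleCoalgebra k H C act)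
    (z b : H) (v : C) :
    PzMap act z (((b ⊗ₜ[k] (1 : H)) * comul (R := k) (1 : H)) ⊗ₜ[k] comul (R := k) v)
      = act (z * b) v := by
  have h1 : PzMap act z (((b ⊗ₜ[k] (1 : H)) * comul (R := k) (1 : H)) ⊗ₜ[k] comul (R := k) v)
      = PzMap act (z * b) (comul (R := k) (1 : H) ⊗ₜ[k] comul (R := k) v) := by
    obtain ⟨s, hs⟩ := TensorProduct.exists_finset (comul (R := k) (1 : H))
    obtain ⟨u, hu⟩ := TensorProduct.exists_finset (comul (R := k) v)
    rw [hs, hu]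
    simp [PzMap, Finset.mul_sum, TensorProduct.sum_tmul, TensorProduct.tmul_sum,
      Algebra.TensorProduct.tmul_mul_tmul, mul_assoc, map_sum]
  rw [h1, PzMap_comul, ← hp.pmc3 (z * b) 1 v, hp.pmc1]

set_option synthInstance.maxHeartbeats 1000000 in
set_option maxHeartbeats 1000000 in
lemma KRgen {act : H →ₗ[k] C →ₗ[k] C} (hp : IsPartialModuleCoalgebra k H C act)
    (z : H) (T : H ⊗[k] H) (U : C ⊗[k] C) :
    (TensorProduct.map (TensorProduct.lift act) (TensorProduct.lift act))
        ((TensorProduct.tensorTensorTensorComm k H H C C)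
          ((LinearMap.lTensor H (LinearMap.mulLeft k z) T) ⊗ₜ[k] U))
      = (TensorProduct.map (TensorProduct.lift act) (PzMap act z))
          ((TensorProduct.tensorTensorTensorComm k H (H ⊗[k] H) C (C ⊗[k] C))
            ((LinearMap.lTensor H (phiMap k H) T) ⊗ₜ[k]
              (LinearMap.lTensor C (comul (R := k)) U))) := by
  induction T using TensorProduct.induction_on with
  | zero => simp
  | tmul a b =>
    induction U using TensorProduct.induction_on with
    | zero => simp
    | tmul u v =>
      simp only [TensorProduct.tensorTensorTensorComm_tmul, TensorProduct.map_tmul,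
        LinearMap.lTensor_tmul, TensorProduct.lift.tmul, LinearMap.mulLeft_apply,
        phiMap, LinearMap.comp_apply, LinearMap.flip_apply, TensorProduct.mk_apply,
        LinearMap.mulRight_apply]
      rw [Pz_shift hp z b v]
    | add U1 U2 hU1 hU2 =>
      simp only [TensorProduct.tmul_add, map_add, hU1, hU2]
  | add T1 T2 hT1 hT2 =>
    simp only [map_add, TensorProduct.add_tmul, hT1, hT2]

set_option synthInstance.maxHeartbeats 1000000 in
set_option maxHeartbeats 1000000 in
lemma phi_comul_one (wh : WeakHopf k H) :
    LinearMap.lTensor H (phiMap k H) (comul (R := k) (1 : H))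
      = LinearMap.lTensor H (comul (R := k)) (comul (R := k) (1 : H)) := by
  rw [← wh.comul_one_right]
  obtain ⟨s, hs⟩ := TensorProduct.exists_finset (comul (R := k) (1 : H))
  rw [hs]
  simp only [map_sum, LinearMap.lTensor_tmul, TensorProduct.assoc_tmul, phiMap,
    LinearMap.comp_apply, LinearMap.flip_apply, TensorProduct.mk_apply,
    LinearMap.mulRight_apply]
  rw [hs]
  simp only [Finset.sum_mul, Finset.mul_sum, TensorProduct.tmul_sum, TensorProduct.sum_tmul,
    Algebra.TensorProduct.tmul_mul_tmul, one_mul, mul_one, map_sum,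
    TensorProduct.assoc_tmul]
  rw [Finset.sum_comm]

lemma part_two (wh : WeakHopf k H) {act : H →ₗ[k] C →ₗ[k] C}
    (hp : IsPartialModuleCoalgebra k H C act) (x : H) (c : C) :
    comul (R := k) (act (wεs k H x) c)
      = LinearMap.lTensor C (act (wεs k H x)) (comul (R := k) c) := by
  rw [hp.pmc2 (wεs k H x) c]
  have h1 : comul (R := k) (wεs k H x)
      = LinearMap.lTensor H (LinearMap.mulLeft k (wεs k H x)) (comul (R := k) (1 : H)) := by
    rw [comul_wεs wh, lTensor_mulLeft_eq]
  rw [h1, KRgen hp, phi_comul_one wh, ← KL hp]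

end AuxD
/-- Properties of the action of elements of `H_s` on a symmetric partial
module coalgebra: (i) `h·(k·c) = hk·c`; (ii) `Δ(h·c) = c₁ ⊗ (h·c₂)`. -/
theorem source_elements_act_globally
    (k : Type*) [Field k] (H : Type*) [Ring H] [Algebra k H] [Coalgebra k H]
    (C : Type*) [AddCommGroup C] [Module k C] [Coalgebra k C]
    (wh : WeakHopf k H) (act : H →ₗ[k] C →ₗ[k] C)
    (hp : IsSymmetricPartialModuleCoalgebra k H C act) :
    (∀ h ∈ Set.range (wεs k H), ∀ (g : H) (c : C), act h (act g c) = act (h * g) c) ∧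
    (∀ h ∈ Set.range (wεs k H), ∀ c : C,
        comul (R := k) (act h c) = LinearMap.lTensor C (act h) (comul (R := k) c)) := by
  refine ⟨fun h hh g c => ?_, fun h hh c => ?_⟩
  · obtain ⟨x, rfl⟩ := hh
    exact part_one wh hp x g c
  · obtain ⟨x, rfl⟩ := hh
    exact part_two wh hp.toIsPartialModuleCoalgebra x c
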